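/- arXiv:1609.08544 — 3 statements merged into one kernel-verified Lean document; each statement's English description precedes it below -/
import Mathlib

section
/- For positive integers m and positive integer weights w_1, …, w_m, the function λ assigning to each r ∈ ℕ the number of points x = (x_1, …, x_m) ∈ ℕ^m with w_1 x_1 + ⋯ + w_m x_m ≤ r is a quasi-polynomial in r, all of whose constituent polynomials have degree exactly m and leading coefficient 1/(m! · w_1 ⋯ w_m). -/
open Polynomial Finset


/-- The weighted order of a point `a ∈ ℕ^m`: `ord_w a = w₁a₁ + ⋯ + w_m a_m`. -/
def ordw {m : ℕ} (w : Fin m → ℕ) (a : Fin m → ℕ) : ℕ := ∑ i, w i * a i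

lemma ordw_finite {m : ℕ} (w : Fin m → ℕ) (hw : ∀ i, 0 < w i) (r : ℕ) :
    {x : Fin m → ℕ | ordw w x ≤ r}.Finite := by
  apply Set.Finite.subset (Set.Finite.pi (fun i : Fin m => Set.finite_Iic r))
  intro x hx
  simp only [Set.mem_pi, Set.mem_univ, Set.mem_Iic, forall_true_left]
  intro i
  calc x i ≤ w i * x i := Nat.le_mul_of_pos_left _ (hw i)
    _ ≤ ordw w x :=
      Finset.single_le_sum (f := fun j => w j * x j) (fun j _ => Nat.zero_le _)
        (Finset.mem_univ i)
    _ ≤ r := hx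

lemma DLdeg (n : ℕ) (s : ℚ) :
    ((X + C s) ^ (n + 1) - X ^ (n + 1) : ℚ[X]).natDegree ≤ n := by
  rw [Polynomial.natDegree_le_iff_coeff_eq_zero]
  intro N hN
  rw [Polynomial.coeff_sub, Polynomial.coeff_X_add_C_pow, Polynomial.coeff_X_pow]
  rcases eq_or_lt_of_le (Nat.succ_le_of_lt hN) with h | h
  · rw [← h]; simp
  · rw [Nat.choose_eq_zero_of_lt h]
    simp [(Nat.ne_of_lt h).symm]

lemma DLcoeff (n : ℕ) (s : ℚ) :
    ((X + C s) ^ (n + 1) - X ^ (n + 1) : ℚ[X]).coeff n = ((n : ℚ) + 1) * s := by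
  rw [Polynomial.coeff_sub, Polynomial.coeff_X_add_C_pow, Polynomial.coeff_X_pow]
  have h1 : n + 1 - n = 1 := by omega
  rw [h1, Nat.choose_succ_self_right]
  simp [Nat.ne_of_lt (Nat.lt_succ_self n)]
  ring

lemma antidiff (s : ℚ) (hs : s ≠ 0) :
    ∀ d : ℕ, ∀ p : ℚ[X], p.natDegree ≤ d →
      ∃ P : ℚ[X], P.natDegree ≤ d + 1 ∧
        P.coeff (d + 1) = p.coeff d / (((d : ℚ) + 1) * s) ∧
        ∀ x : ℚ, P.eval (x + s) - P.eval x = p.eval x := by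
  intro d
  induction d with
  | zero =>
      intro p hp
      set c := p.coeff 0 with hc
      have hpc : p = C c := Polynomial.eq_C_of_natDegree_le_zero hp
      refine ⟨C (c / s) * X, ?_, ?_, ?_⟩
      · simpa using Polynomial.natDegree_C_mul_le (c / s) X
      · simp [Polynomial.coeff_C_mul]
      · intro x
        rw [hpc]
        simp only [Polynomial.eval_mul, Polynomial.eval_C, Polynomial.eval_X]
        field_simp
        ring
  | succ d IH =>
      intro p hp
      set c := p.coeff (d + 1) with hc
      set a := c / (((d : ℚ) + 2) * s) with ha
      have hds : ((d : ℚ) + 2) * s ≠ 0 := by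
        apply mul_ne_zero _ hs
        positivity
      set D : ℚ[X] := C a * ((X + C s) ^ (d + 2) - X ^ (d + 2)) with hD
      have hDdeg : D.natDegree ≤ d + 1 :=
        le_trans (Polynomial.natDegree_C_mul_le _ _) (DLdeg (d + 1) s)
      have hDcoeff : D.coeff (d + 1) = c := by
        rw [hD, Polynomial.coeff_C_mul, DLcoeff (d + 1) s, ha]
        push_cast
        rw [div_mul_eq_mul_div, div_eq_iff hds]
        ring
      set r : ℚ[X] := p - D with hr
      have hrdeg : r.natDegree ≤ d := by
        rw [Polynomial.natDegree_le_iff_coeff_eq_zero]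
        intro N hN
        rcases eq_or_lt_of_le (Nat.succ_le_of_lt hN) with h | h
        · rw [hr, Polynomial.coeff_sub, ← h, ← hc, hDcoeff]; ring
        · apply Polynomial.coeff_eq_zero_of_natDegree_lt
          exact lt_of_le_of_lt (le_trans (Polynomial.natDegree_sub_le p D) (max_le hp hDdeg)) h
      obtain ⟨R, hRdeg, _, hReval⟩ := IH r hrdeg
      refine ⟨C a * X ^ (d + 2) + R, ?_, ?_, ?_⟩
      · apply le_trans (Polynomial.natDegree_add_le _ _)
        apply max_le
        · exact le_trans (Polynomial.natDegree_C_mul_le _ _) (by simp)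
        · omega
      · rw [Polynomial.coeff_add, Polynomial.coeff_C_mul, Polynomial.coeff_X_pow,
          Polynomial.coeff_eq_zero_of_natDegree_lt (lt_of_le_of_lt hRdeg (by omega))]
        simp [ha]
        ring_nf
      · intro x
        have h1 : (C a * X ^ (d + 2)).eval (x + s) - (C a * X ^ (d + 2)).eval x
            = D.eval x := by
          simp [hD]
          ring
        have h2 := hReval x
        have : p.eval x = D.eval x + r.eval x := by
          rw [hr]; simp
        rw [this, ← h1, ← h2]
        simp
        ring

lemma taylor_coeff_top {p : ℚ[X]} {n : ℕ} (h : p.natDegree ≤ n) (a : ℚ) :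
    (Polynomial.taylor a p).coeff n = p.coeff n := by
  rcases lt_or_eq_of_le h with h' | h'
  · rw [Polynomial.coeff_eq_zero_of_natDegree_lt (by rwa [Polynomial.natDegree_taylor]),
      Polynomial.coeff_eq_zero_of_natDegree_lt h']
  · have h1 : (Polynomial.taylor a p).coeff n = (Polynomial.taylor a p).leadingCoeff := by
      rw [Polynomial.leadingCoeff, Polynomial.natDegree_taylor, h']
    rw [h1, Polynomial.taylor_apply,
      Polynomial.leadingCoeff_comp (by rw [Polynomial.natDegree_X_add_C]; exact one_ne_zero)]
    simp [Polynomial.leadingCoeff, h']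

lemma count_succ (m : ℕ) (w : Fin (m + 1) → ℕ) (hw : ∀ i, 0 < w i) (r : ℕ) :
    Set.ncard {x : Fin (m + 1) → ℕ | ordw w x ≤ r}
      = ∑ j ∈ Finset.range (r / w (Fin.last m) + 1),
          Set.ncard {y : Fin m → ℕ | ordw (Fin.init w) y ≤ r - j * w (Fin.last m)} := by
  set W := w (Fin.last m) with hWdef
  have hW : 0 < W := hw _
  have hsplit : ∀ x : Fin (m + 1) → ℕ,
      ordw w x = ordw (Fin.init w) (Fin.init x) + W * x (Fin.last m) := by
    intro x
    simp only [ordw, Fin.sum_univ_castSucc]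
    rfl
  have hfin : ∀ s : ℕ, {y : Fin m → ℕ | ordw (Fin.init w) y ≤ s}.Finite :=
    fun s => ordw_finite (Fin.init w) (fun i => hw _) s
  let e : {x : Fin (m + 1) → ℕ // ordw w x ≤ r} ≃
      (j : Fin (r / W + 1)) × {y : Fin m → ℕ // ordw (Fin.init w) y ≤ r - (j : ℕ) * W} :=
    { toFun := fun x =>
        ⟨⟨x.1 (Fin.last m), by
            have := hsplit x.1
            have hx := x.2
            refine Nat.lt_succ_of_le ?_
            rw [Nat.le_div_iff_mul_le hW, mul_comm]
            omega⟩,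
         ⟨Fin.init x.1, by
            have := hsplit x.1
            have hx := x.2
            simp only []
            apply Nat.le_sub_of_add_le
            rw [mul_comm]
            omega⟩⟩
      invFun := fun jy =>
        ⟨Fin.snoc jy.2.1 (jy.1 : ℕ), by
            have h1 : (jy.1 : ℕ) * W ≤ r := by
              rw [← Nat.le_div_iff_mul_le hW]
              exact Nat.lt_succ_iff.mp jy.1.isLt
            have h2 := jy.2.2
            rw [hsplit]
            rw [show Fin.init (Fin.snoc jy.2.1 ((jy.1 : ℕ)) : Fin (m+1) → ℕ) = jy.2.1
              from Fin.init_snoc _ _]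
            rw [show (Fin.snoc jy.2.1 ((jy.1 : ℕ)) : Fin (m+1) → ℕ) (Fin.last m) = (jy.1 : ℕ)
              from Fin.snoc_last _ _]
            have h3 : ordw (Fin.init w) (jy.2 : Fin m → ℕ) + (jy.1 : ℕ) * W ≤ r := by
              have h4 := Nat.add_le_add_right h2 ((jy.1 : ℕ) * W)
              rwa [Nat.sub_add_cancel h1] at h4
            rw [Nat.mul_comm W]
            exact h3⟩
      left_inv := fun x => Subtype.ext (Fin.snoc_init_self x.1)
      right_inv := fun jy => by
        apply Sigma.subtype_ext
        · apply Fin.ext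
          simp
        · simp }
  have hcard : Nat.card {x : Fin (m + 1) → ℕ // ordw w x ≤ r}
      = ∑ j : Fin (r / W + 1),
          Nat.card {y : Fin m → ℕ // ordw (Fin.init w) y ≤ r - (j : ℕ) * W} := by
    haveI : ∀ j : Fin (r / W + 1),
        Fintype {y : Fin m → ℕ // ordw (Fin.init w) y ≤ r - (j : ℕ) * W} :=
      fun j => (hfin _).fintype
    rw [Nat.card_congr e, Nat.card_eq_fintype_card, Fintype.card_sigma]
    simp [Nat.card_eq_fintype_card]
  calc Set.ncard {x : Fin (m + 1) → ℕ | ordw w x ≤ r}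
      = Nat.card {x : Fin (m + 1) → ℕ // ordw w x ≤ r} :=
        (Nat.card_coe_set_eq _).symm
    _ = ∑ j : Fin (r / W + 1),
          Nat.card {y : Fin m → ℕ // ordw (Fin.init w) y ≤ r - (j : ℕ) * W} := hcard
    _ = ∑ j : Fin (r / W + 1),
          Set.ncard {y : Fin m → ℕ | ordw (Fin.init w) y ≤ r - (j : ℕ) * W} :=
        Finset.sum_congr rfl (fun j _ => Nat.card_coe_set_eq _)
    _ = ∑ j ∈ Finset.range (r / W + 1),
          Set.ncard {y : Fin m → ℕ | ordw (Fin.init w) y ≤ r - j * W} :=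
        Fin.sum_univ_eq_sum_range
          (fun j => Set.ncard {y : Fin m → ℕ | ordw (Fin.init w) y ≤ r - j * W}) _

lemma quasi (m : ℕ) : ∀ (w : Fin m → ℕ), (∀ i, 0 < w i) →
    ∃ (q : ℕ) (hq : 0 < q) (g : Fin q → Polynomial ℚ),
      (∀ i : Fin q, (g i).natDegree ≤ m ∧
        (g i).coeff m = 1 / ((Nat.factorial m : ℚ) * ∏ j, (w j : ℚ))) ∧
      ∀ r : ℕ,
        (Set.ncard {x : Fin m → ℕ | ordw w x ≤ r} : ℚ)
          = (g ⟨r % q, Nat.mod_lt r hq⟩).eval (r : ℚ) := by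
  induction m with
  | zero =>
      intro w hw
      refine ⟨1, one_pos, fun _ => 1, fun i => ⟨by simp, by simp⟩, fun r => ?_⟩
      have huniv : {x : Fin 0 → ℕ | ordw w x ≤ r} = Set.univ := by
        ext x; simp [ordw]
      rw [huniv, Set.ncard_univ]
      simp [Nat.card_unique]
  | succ m IH =>
      intro w hw
      obtain ⟨q, hq, g, hg, hval⟩ := IH (Fin.init w) (fun i => hw _)
      set W := w (Fin.last m) with hWdef
      have hW : 0 < W := hw _
      set Q := q * W with hQdef
      have hQ : 0 < Q := Nat.mul_pos hq hW
      set c : ℚ := 1 / ((Nat.factorial m : ℚ) * ∏ j, (Fin.init w j : ℚ)) with hc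
      set h : ℕ → ℚ :=
        fun n => (Set.ncard {y : Fin m → ℕ | ordw (Fin.init w) y ≤ n} : ℚ) with hh
      set F : ℕ → ℚ :=
        fun r => (Set.ncard {x : Fin (m + 1) → ℕ | ordw w x ≤ r} : ℚ) with hF
      have hcount : ∀ r : ℕ, F r = ∑ j ∈ Finset.range (r / W + 1), h (r - j * W) := by
        intro r
        simp only [hF, hh]
        rw [count_succ m w hw r, Nat.cast_sum]
      have hstep : ∀ r : ℕ,
          F (r + Q) = F r + ∑ j ∈ Finset.range q, h (r + (q - j) * W) := by
        intro r
        rw [hcount, hcount]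
        have hdiv : (r + Q) / W + 1 = q + (r / W + 1) := by
          rw [hQdef, Nat.add_mul_div_right r q hW]
          ring
        rw [hdiv, Finset.sum_range_add]
        have e1 : ∀ j ∈ Finset.range (r / W + 1),
            h (r + Q - (q + j) * W) = h (r - j * W) := by
          intro j _
          congr 1
          rw [hQdef, add_mul]
          omega
        have e2 : ∀ j ∈ Finset.range q,
            h (r + Q - j * W) = h (r + (q - j) * W) := by
          intro j hj
          rw [Finset.mem_range] at hj
          congr 1
          rw [hQdef, Nat.sub_mul]
          exact Nat.add_sub_assoc (Nat.mul_le_mul_right W hj.le) r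
        rw [Finset.sum_congr rfl e1, Finset.sum_congr rfl e2]
        ring
      have hgc : ∀ n : ℕ, (g ⟨n % q, Nat.mod_lt n hq⟩).coeff m = c := fun n => (hg _).2
      set p : ℕ → Polynomial ℚ := fun i => ∑ j ∈ Finset.range q,
        Polynomial.taylor (((q - j) * W : ℕ) : ℚ)
          (g ⟨(i + (q - j) * W) % q, Nat.mod_lt _ hq⟩) with hp
      have hpdiff : ∀ i r : ℕ, r % q = i % q →
          F (r + Q) = F r + (p i).eval (r : ℚ) := by
        intro i r hri
        rw [hstep r, hp]
        simp only [Polynomial.eval_finset_sum]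
        congr 1
        refine Finset.sum_congr rfl (fun j hj => ?_)
        rw [Polynomial.taylor_eval]
        have hidx : (r + (q - j) * W) % q = (i + (q - j) * W) % q :=
          Nat.ModEq.add_right _ hri
        simp only [hh]
        rw [hval (r + (q - j) * W)]
        rw [show (⟨(r + (q - j) * W) % q, Nat.mod_lt _ hq⟩ : Fin q)
            = (⟨(i + (q - j) * W) % q, Nat.mod_lt _ hq⟩ : Fin q) from Fin.ext hidx]
        rw [Nat.cast_add]
      have hpdeg : ∀ i : ℕ, (p i).natDegree ≤ m := by
        intro i
        apply Polynomial.natDegree_sum_le_of_forall_le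
        intro j _
        rw [Polynomial.natDegree_taylor]
        exact (hg _).1
      have hpcoeff : ∀ i : ℕ, (p i).coeff m = (q : ℚ) * c := by
        intro i
        rw [hp]
        simp only
        rw [Polynomial.finset_sum_coeff]
        rw [Finset.sum_congr rfl
          (fun j _ => (taylor_coeff_top (hg _).1 _).trans (hgc _))]
        simp [Finset.sum_const]
      have hQQ : ((Q : ℚ)) ≠ 0 := Nat.cast_ne_zero.mpr hQ.ne'
      choose P hPdeg hPcoeff hPeval using
        fun i : Fin Q => antidiff (Q : ℚ) hQQ m (p (i : ℕ)) (hpdeg (i : ℕ))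
      set G : Fin Q → Polynomial ℚ :=
        fun i => Polynomial.C (F (i : ℕ) - (P i).eval ((i : ℕ) : ℚ)) + P i with hG
      have htele : ∀ (i : Fin Q) (k : ℕ),
          F ((i : ℕ) + Q * k) = F (i : ℕ) - (P i).eval ((i : ℕ) : ℚ)
            + (P i).eval ((((i : ℕ) + Q * k : ℕ)) : ℚ) := by
        intro i k
        induction k with
        | zero => simp
        | succ k IHk =>
            have hmod : ((i : ℕ) + Q * k) % q = (i : ℕ) % q := by
              have hQk : Q * k = q * (W * k) := by rw [hQdef]; ring
              rw [hQk]
              exact Nat.add_mul_mod_self_left _ _ _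
            have hd := hpdiff (i : ℕ) ((i : ℕ) + Q * k) hmod
            have h2 : (i : ℕ) + Q * (k + 1) = ((i : ℕ) + Q * k) + Q := by ring
            rw [h2, hd, IHk]
            have he := hPeval i ((((i : ℕ) + Q * k : ℕ)) : ℚ)
            have harg2 : ((((i : ℕ) + Q * k : ℕ)) : ℚ) + (Q : ℚ)
                = ((((i : ℕ) + Q * k + Q : ℕ)) : ℚ) := by push_cast; ring
            rw [harg2] at he
            rw [← he]
            ring
      have hfinal : ∀ r : ℕ, F r = (G ⟨r % Q, Nat.mod_lt r hQ⟩).eval (r : ℚ) := by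
        intro r
        set i : Fin Q := ⟨r % Q, Nat.mod_lt r hQ⟩ with hi
        have hr : (i : ℕ) + Q * (r / Q) = r := Nat.mod_add_div r Q
        have ht := htele i (r / Q)
        rw [hr] at ht
        rw [ht, hG]
        simp only [Polynomial.eval_add, Polynomial.eval_C]
        try ring
      have hGdeg : ∀ i : Fin Q, (G i).natDegree ≤ m + 1 := fun i =>
        le_trans (Polynomial.natDegree_add_le _ _) (max_le (by simp) (hPdeg i))
      have hGcoeff : ∀ i : Fin Q, (G i).coeff (m + 1)
          = 1 / ((Nat.factorial (m + 1) : ℚ) * ∏ j, (w j : ℚ)) := by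
        intro i
        rw [hG]
        simp only [Polynomial.coeff_add, Polynomial.coeff_C]
        rw [if_neg (Nat.succ_ne_zero m)]
        rw [hPcoeff i, hpcoeff]
        have hprod : (∏ j, (w j : ℚ))
            = (∏ j : Fin m, (Fin.init w j : ℚ)) * (W : ℚ) :=
          Fin.prod_univ_castSucc (fun j => (w j : ℚ))
        rw [hprod, Nat.factorial_succ, hc, hQdef]
        have nz₁ : (Nat.factorial m : ℚ) ≠ 0 := Nat.cast_ne_zero.mpr (Nat.factorial_ne_zero m)
        have nz₂ : (∏ j : Fin m, (Fin.init w j : ℚ)) ≠ 0 :=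
          Finset.prod_ne_zero_iff.mpr
            (fun j _ => Nat.cast_ne_zero.mpr (hw _).ne')
        have nz₃ : (W : ℚ) ≠ 0 := Nat.cast_ne_zero.mpr hW.ne'
        have nz₄ : (q : ℚ) ≠ 0 := Nat.cast_ne_zero.mpr hq.ne'
        have nz₅ : ((m : ℚ) + 1) ≠ 0 := by positivity
        push_cast
        field_simp
        ring
      refine ⟨Q, hQ, G, fun i => ⟨hGdeg i, hGcoeff i⟩, fun r => hfinal r⟩

/-- For positive integers `m` and positive integer weights `w₁, …, w_m`, the function
assigning to each `r ∈ ℕ` the number of points `x ∈ ℕ^m` with `w₁x₁ + ⋯ + w_m x_m ≤ r`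
is a quasi-polynomial in `r`, all of whose constituent polynomials have degree exactly `m`
and leading coefficient `1/(m! · w₁ ⋯ w_m)`. -/
theorem dimension_quasipolynomial_of_full_cone
    (m : ℕ) (hm : 0 < m) (w : Fin m → ℕ) (hw : ∀ i, 0 < w i) :
    ∃ (q : ℕ) (hq : 0 < q) (g : Fin q → Polynomial ℚ),
      (∀ i : Fin q, (g i).natDegree = m ∧
        (g i).coeff m = 1 / ((Nat.factorial m : ℚ) * ∏ j, (w j : ℚ))) ∧
      ∀ r : ℕ,
        (Set.ncard {x : Fin m → ℕ | ordw w x ≤ r} : ℚ)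
          = (g ⟨r % q, Nat.mod_lt r hq⟩).eval (r : ℚ) := by
  obtain ⟨q, hq, g, hg, hval⟩ := quasi m w hw
  refine ⟨q, hq, g, fun i => ⟨?_, (hg i).2⟩, hval⟩
  have hne : (g i).coeff m ≠ 0 := by
    rw [(hg i).2]
    apply one_div_ne_zero
    apply mul_ne_zero
    · exact Nat.cast_ne_zero.mpr (Nat.factorial_ne_zero m)
    · exact Finset.prod_ne_zero_iff.mpr
        (fun j _ => Nat.cast_ne_zero.mpr (hw j).ne')
  exact le_antisymm (hg i).1 (Polynomial.le_natDegree_of_ne_zero hne)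
end

section
/- Let A ⊆ ℕ^m. There exists a quasi-polynomial of degree at most m − 1 that equals Card V_A^{(w)}(r) for all sufficiently large r if and only if A is nonempty; moreover, if A = ∅ then Card V_A^{(w)}(r) equals, for every r ∈ ℕ, the number of x ∈ ℕ^m with ord_w x ≤ r, which is a quasi-polynomial of degree exactly m. -/
/-- `V_A`: the set of `v ∈ ℕ^m` that do not exceed (w.r.t. the product order)
any element of `A`. -/
def VA {m : ℕ} (A : Set (Fin m → ℕ)) : Set (Fin m → ℕ) := {v | ∀ a ∈ A, ¬ a ≤ v}

/-- `V_A^{(w)}(r)`: elements of `V_A` of weighted order at most `r`. -/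
def VAw {m : ℕ} (w : Fin m → ℕ) (A : Set (Fin m → ℕ)) (r : ℕ) : Set (Fin m → ℕ) :=
  {v ∈ VA A | ordw w v ≤ r}

/-!
Slice `ℕ^{n+1}` by the first coordinate: a point `(k, t)` lies in `V_A` iff `t ∈ V_{A_k}`, where
`A_k` is the set of tails of the points of `A` with first coordinate at most `k`. Hence the count
in dimension `n + 1` is `∑_{k ≤ r/w₀} c_{A_k}(r - w₀k)`. After replacing `A` by its finitely many
minimal elements (Dickson's lemma), `A_k` is constant for large `k`, so the count is a finite sum
of shifted counts in dimension `n` plus `∑_k c_{A_∞}(r - w₀k)`. Such a sum along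
`r, r - w₀, r - 2w₀, …` raises the degree of a quasi-polynomial by one: on each residue class
it differs by a constant from a polynomial antidifference, obtained from Bernoulli polynomials.
By induction the count has degree `< m` if `A ≠ ∅` and `< m + 1` if `A = ∅`. Conversely, for
`A = ∅` the box `[0, r / (∑ wᵢ + 1)]^m` shows that the count grows like `r^m`.
-/

open Polynomial Finset Filter

namespace Polynomial

theorem mem_degreeLT_iff_natDegree_le_pred {R : Type*} [Semiring R] {n : ℕ} (hn : 0 < n)
    {p : R[X]} : p ∈ degreeLT R n ↔ p.natDegree ≤ n - 1 := by
  obtain ⟨k, rfl⟩ := Nat.exists_eq_add_of_lt hn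
  rw [zero_add, degreeLT_succ_eq_degreeLE, mem_degreeLE, natDegree_le_iff_degree_le,
    Nat.add_sub_cancel]

theorem eval_eq_sum_range_of_mem_degreeLT {R : Type*} [Semiring R] {n : ℕ} {p : R[X]}
    (hp : p ∈ degreeLT R n) (x : R) : p.eval x = ∑ j ∈ range n, p.coeff j * x ^ j := by
  rcases eq_or_ne p 0 with rfl | hp0
  · simp
  · exact eval_eq_sum_range' ((natDegree_lt_iff_degree_lt hp0).2 (mem_degreeLT.1 hp)) x

theorem natDegree_bernoulli_le (n : ℕ) : (bernoulli n).natDegree ≤ n :=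
  natDegree_sum_le_of_forall_le _ _ fun _ _ => natDegree_monomial_le _ |>.trans (Nat.sub_le _ _)

/-- Built from `bernoulli (j + 1) (y + 1) - bernoulli (j + 1) y = (j + 1) * y ^ j` at `y = x / Q`. -/
theorem exists_mem_degreeLT_eval_add {n : ℕ} {Q : ℚ} (hQ : Q ≠ 0) {h : ℚ[X]}
    (hh : h ∈ degreeLT ℚ n) :
    ∃ G ∈ degreeLT ℚ (n + 1), ∀ x, G.eval (x + Q) = G.eval x + h.eval x := by
  refine ⟨∑ j ∈ range n, C (h.coeff j * Q ^ j / (j + 1)) * (bernoulli (j + 1)).comp (C Q⁻¹ * X),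
    Submodule.sum_mem _ fun j hj => ?_, fun x => ?_⟩
  · refine (mem_degreeLT_iff_natDegree_le_pred n.succ_pos).2 <| (natDegree_C_mul_le _ _).trans ?_
    rw [natDegree_comp, natDegree_C_mul_X _ (inv_ne_zero hQ), mul_one]
    exact (natDegree_bernoulli_le _).trans (by simpa using mem_range.1 hj)
  · simp only [eval_finsetSum, eval_mul, eval_C, eval_comp, eval_X,
      eval_eq_sum_range_of_mem_degreeLT hh x, ← sum_add_distrib]
    refine sum_congr rfl fun j _ => ?_
    rw [show Q⁻¹ * (x + Q) = 1 + Q⁻¹ * x by field_simp; ring, bernoulli_eval_one_add, mul_pow,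
      inv_pow]
    field_simp
    push_cast
    ring

end Polynomial

def IsQuasiPolyFrom (N q n : ℕ) (f : ℕ → ℚ) : Prop :=
  ∃ g : ℕ → ℚ[X], (∀ i, g i ∈ degreeLT ℚ n) ∧ ∀ r, N ≤ r → f r = (g (r % q)).eval (r : ℚ)

def IsEventuallyQuasiPoly (n : ℕ) (f : ℕ → ℚ) : Prop :=
  ∃ N q, 0 < q ∧ IsQuasiPolyFrom N q n f

def stepSum {M : Type*} [AddCommMonoid M] (w : ℕ) (f : ℕ → M) (r : ℕ) : M :=
  ∑ k ∈ range (r / w + 1), f (r - w * k)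

theorem stepSum_add_mul {M : Type*} [AddCommMonoid M] {w : ℕ} (hw : 0 < w) (f : ℕ → M)
    (q r : ℕ) :
    stepSum w f (r + w * q) = stepSum w f r + ∑ t ∈ range q, f (r + w * (q - t)) := by
  rw [stepSum, stepSum, show (r + w * q) / w + 1 = q + (r / w + 1) by
    rw [Nat.add_mul_div_left _ _ hw]; ring, sum_range_add, add_comm]
  congr 1
  · refine sum_congr rfl fun k _ => congrArg f ?_
    rw [Nat.mul_add]
    omega
  · refine sum_congr rfl fun t ht => congrArg f ?_
    have : w * t ≤ w * q := Nat.mul_le_mul_left w (mem_range.1 ht).le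
    rw [Nat.mul_sub]
    omega

theorem sum_range_div_succ_eq_add_stepSum {M : Type*} [AddCommMonoid M] {w K : ℕ} (hw : 0 < w)
    {F : ℕ → ℕ → M} {φ : ℕ → M} (hF : ∀ k, K ≤ k → F k = φ) {r : ℕ} (hr : w * K ≤ r) :
    ∑ k ∈ range (r / w + 1), F k (r - w * k)
      = ∑ k ∈ range K, F k (r - w * k) + stepSum w φ (r - w * K) := by
  have hK : K ≤ r / w := (Nat.le_div_iff_mul_le hw).2 (by rwa [mul_comm])
  rw [show r / w + 1 = K + ((r - w * K) / w + 1) by rw [Nat.sub_mul_div]; omega, sum_range_add,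
    stepSum]
  congr 1
  refine sum_congr rfl fun k _ => ?_
  rw [hF _ (Nat.le_add_right K k), Nat.mul_add, Nat.sub_sub]

theorem apply_eq_apply_mul_add_mod_of_periodicFrom {α : Type*} {D : ℕ → α} {N Q : ℕ}
    (hQ : 0 < Q) (hD : ∀ r, N ≤ r → D (r + Q) = D r) {r : ℕ} (hr : N ≤ r) :
    D r = D (N * Q + r % Q) := by
  have hshift : ∀ s, N ≤ s → ∀ t, D (s + Q * t) = D s := by
    intro s hs t
    induction t with
    | zero => simp
    | succ t ih => rw [Nat.mul_succ, ← add_assoc, hD _ (by omega), ih]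
  have hNQ : N ≤ N * Q := Nat.le_mul_of_pos_right N hQ
  calc D r = D (r + Q * N) := (hshift r hr N).symm
    _ = D (N * Q + r % Q + Q * (r / Q)) := by
      have := Nat.mod_add_div r Q
      rw [mul_comm N Q]
      congr 1
      omega
    _ = D (N * Q + r % Q) := hshift _ (by omega) _

theorem sub_mod_eq_mod_add_mod {r c q : ℕ} (hq : 0 < q) (hc : c ≤ r) :
    (r - c) % q = (r % q + (q * c - c)) % q := by
  have : c ≤ q * c := Nat.le_mul_of_pos_left c hq
  rw [Nat.mod_add_mod, ← Nat.add_mul_mod_self_left (r - c) q c]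
  congr 1
  omega

namespace IsQuasiPolyFrom

variable {N q n : ℕ} {f f' : ℕ → ℚ}

theorem zero : IsQuasiPolyFrom N q n 0 :=
  ⟨0, fun _ => Submodule.zero_mem _, fun _ _ => by simp⟩

theorem mono_start {N' : ℕ} (hf : IsQuasiPolyFrom N q n f) (h : N ≤ N') :
    IsQuasiPolyFrom N' q n f :=
  let ⟨g, hg, hfg⟩ := hf
  ⟨g, hg, fun r hr => hfg r (h.trans hr)⟩

theorem mono {n' : ℕ} (hf : IsQuasiPolyFrom N q n f) (h : n ≤ n') : IsQuasiPolyFrom N q n' f :=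
  let ⟨g, hg, hfg⟩ := hf
  ⟨g, fun i => degreeLT_mono h (hg i), hfg⟩

theorem of_dvd {q' : ℕ} (hf : IsQuasiPolyFrom N q n f) (h : q ∣ q') :
    IsQuasiPolyFrom N q' n f :=
  let ⟨g, hg, hfg⟩ := hf
  ⟨fun i => g (i % q), fun _ => hg _, fun r hr => by
    dsimp only
    rw [Nat.mod_mod_of_dvd r h]
    exact hfg r hr⟩

theorem add (hf : IsQuasiPolyFrom N q n f) (hf' : IsQuasiPolyFrom N q n f') :
    IsQuasiPolyFrom N q n (f + f') :=
  let ⟨g, hg, hfg⟩ := hf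
  let ⟨g', hg', hfg'⟩ := hf'
  ⟨g + g', fun i => Submodule.add_mem _ (hg i) (hg' i), fun r hr => by
    simp [hfg r hr, hfg' r hr]⟩

theorem sum {ι : Type*} (s : Finset ι) {F : ι → ℕ → ℚ}
    (hF : ∀ i ∈ s, IsQuasiPolyFrom N q n (F i)) : IsQuasiPolyFrom N q n (∑ i ∈ s, F i) := by
  classical
  induction s using Finset.induction_on with
  | empty => simpa using zero
  | insert i s hi ih =>
    rw [sum_insert hi]
    exact (hF i (mem_insert_self i s)).add (ih fun j hj => hF j (mem_insert_of_mem hj))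

theorem comp_add (hf : IsQuasiPolyFrom N q n f) (c : ℕ) :
    IsQuasiPolyFrom N q n (fun r => f (r + c)) :=
  let ⟨g, hg, hfg⟩ := hf
  ⟨fun i => taylor (c : ℚ) (g ((i + c) % q)),
    fun _ => mem_degreeLT.2 ((degree_taylor _ _).trans_lt (mem_degreeLT.1 (hg _))),
    fun r hr => by
      dsimp only
      rw [hfg _ (hr.trans (Nat.le_add_right r c)), taylor_eval, Nat.mod_add_mod, Nat.cast_add]⟩

theorem comp_sub (hf : IsQuasiPolyFrom N q n f) (hq : 0 < q) (c : ℕ) :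
    IsQuasiPolyFrom (N + c) q n (fun r => f (r - c)) :=
  let ⟨g, hg, hfg⟩ := hf
  ⟨fun i => taylor (-c : ℚ) (g ((i + (q * c - c)) % q)),
    fun _ => mem_degreeLT.2 ((degree_taylor _ _).trans_lt (mem_degreeLT.1 (hg _))),
    fun r hr => by
      dsimp only
      rw [hfg _ (by omega), taylor_eval, sub_mod_eq_mod_add_mod hq (by omega),
        Nat.cast_sub (by omega), sub_eq_add_neg]⟩

/-- On each residue class mod `Q`, `F` differs from an antidifference of `H` by a function that
is `Q`-periodic from `N` on, hence constant there. -/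
theorem of_add_period {Q : ℕ} (hQ : 0 < Q) {F H : ℕ → ℚ}
    (hF : ∀ r, N ≤ r → F (r + Q) = F r + H r) (hH : IsQuasiPolyFrom N Q n H) :
    IsQuasiPolyFrom N Q (n + 1) F := by
  obtain ⟨h, hh, hHh⟩ := hH
  choose G hG hGh using fun i => exists_mem_degreeLT_eval_add (Nat.cast_ne_zero.2 hQ.ne') (hh i)
  set D : ℕ → ℚ := fun r => F r - (G (r % Q)).eval (r : ℚ)
  have hD : ∀ r, N ≤ r → D (r + Q) = D r := fun r hr => by
    simp only [D, Nat.add_mod_right, Nat.cast_add, hGh, hF r hr, hHh r hr]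
    ring
  refine ⟨fun i => G i + C (D (N * Q + i)),
    fun i => Submodule.add_mem _ (hG i) (mem_degreeLT.2 (degree_C_le.trans_lt ?_)), fun r hr => ?_⟩
  · exact_mod_cast n.succ_pos
  · rw [eval_add, eval_C, ← apply_eq_apply_mul_add_mod_of_periodicFrom hQ hD hr]
    ring

theorem stepSum (hf : IsQuasiPolyFrom N q n f) (hq : 0 < q) {w : ℕ} (hw : 0 < w) :
    IsQuasiPolyFrom N (w * q) (n + 1) (stepSum w f) := by
  refine of_add_period (Nat.mul_pos hw hq) (H := ∑ t ∈ range q, fun r => f (r + w * (q - t)))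
    (fun r _ => by rw [stepSum_add_mul hw, Finset.sum_apply]) ?_
  exact (sum _ fun t _ => hf.comp_add _).of_dvd (dvd_mul_left q w)

end IsQuasiPolyFrom

theorem isQuasiPolyFrom_iff_exists_fin {N q n : ℕ} (hq : 0 < q) {f : ℕ → ℚ} :
    IsQuasiPolyFrom N q n f ↔ ∃ g : Fin q → ℚ[X], (∀ i, g i ∈ degreeLT ℚ n) ∧
      ∀ r, N ≤ r → f r = (g ⟨r % q, Nat.mod_lt r hq⟩).eval (r : ℚ) := by
  constructor
  · rintro ⟨g, hg, hfg⟩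
    exact ⟨fun i => g i, fun i => hg i, hfg⟩
  · rintro ⟨g, hg, hfg⟩
    refine ⟨fun i => if h : i < q then g ⟨i, h⟩ else 0, fun i => ?_, fun r hr => ?_⟩
    · dsimp only
      split_ifs
      exacts [hg _, Submodule.zero_mem _]
    · simp only [Nat.mod_lt r hq, dite_true]
      exact hfg r hr

namespace IsEventuallyQuasiPoly

variable {n : ℕ} {f f' : ℕ → ℚ}

theorem iff_exists_fin (hn : 0 < n) :
    IsEventuallyQuasiPoly n f ↔ ∃ (q : ℕ) (hq : 0 < q) (g : Fin q → ℚ[X]),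
      (∀ i, (g i).natDegree ≤ n - 1) ∧
      ∃ N : ℕ, ∀ r, N ≤ r → f r = (g ⟨r % q, Nat.mod_lt r hq⟩).eval (r : ℚ) := by
  constructor
  · rintro ⟨N, q, hq, hf⟩
    obtain ⟨g, hg, hfg⟩ := (isQuasiPolyFrom_iff_exists_fin hq).1 hf
    exact ⟨q, hq, g, fun i => (mem_degreeLT_iff_natDegree_le_pred hn).1 (hg i), N, hfg⟩
  · rintro ⟨q, hq, g, hg, N, hfg⟩
    exact ⟨N, q, hq, (isQuasiPolyFrom_iff_exists_fin hq).2
      ⟨g, fun i => (mem_degreeLT_iff_natDegree_le_pred hn).2 (hg i), hfg⟩⟩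

theorem zero : IsEventuallyQuasiPoly n 0 := ⟨0, 1, one_pos, .zero⟩

theorem mono {n' : ℕ} (hf : IsEventuallyQuasiPoly n f) (h : n ≤ n') :
    IsEventuallyQuasiPoly n' f :=
  let ⟨N, q, hq, hf⟩ := hf
  ⟨N, q, hq, hf.mono h⟩

theorem congr (hf : IsEventuallyQuasiPoly n f) {M : ℕ} (h : ∀ r, M ≤ r → f r = f' r) :
    IsEventuallyQuasiPoly n f' :=
  let ⟨N, q, hq, g, hg, hfg⟩ := hf
  ⟨max N M, q, hq, g, hg, fun r hr => by
    rw [← h r (le_of_max_le_right hr), hfg r (le_of_max_le_left hr)]⟩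

theorem add (hf : IsEventuallyQuasiPoly n f) (hf' : IsEventuallyQuasiPoly n f') :
    IsEventuallyQuasiPoly n (f + f') :=
  let ⟨N, q, hq, hf⟩ := hf
  let ⟨N', q', hq', hf'⟩ := hf'
  ⟨max N N', q * q', Nat.mul_pos hq hq',
    ((hf.of_dvd (dvd_mul_right q q')).mono_start (le_max_left N N')).add
      ((hf'.of_dvd (dvd_mul_left q' q)).mono_start (le_max_right N N'))⟩

theorem sum {ι : Type*} (s : Finset ι) {F : ι → ℕ → ℚ}
    (hF : ∀ i ∈ s, IsEventuallyQuasiPoly n (F i)) : IsEventuallyQuasiPoly n (∑ i ∈ s, F i) := by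
  classical
  induction s using Finset.induction_on with
  | empty => simpa using zero
  | insert i s hi ih =>
    rw [sum_insert hi]
    exact (hF i (mem_insert_self i s)).add (ih fun j hj => hF j (mem_insert_of_mem hj))

theorem comp_sub (hf : IsEventuallyQuasiPoly n f) (c : ℕ) :
    IsEventuallyQuasiPoly n (fun r => f (r - c)) :=
  let ⟨N, q, hq, hf⟩ := hf
  ⟨N + c, q, hq, hf.comp_sub hq c⟩

theorem stepSum (hf : IsEventuallyQuasiPoly n f) {w : ℕ} (hw : 0 < w) :
    IsEventuallyQuasiPoly (n + 1) (stepSum w f) :=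
  let ⟨N, q, hq, hf⟩ := hf
  ⟨N, w * q, Nat.mul_pos hw hq, hf.stepSum hq hw⟩

theorem eventually_lt_mul_pow (hf : IsEventuallyQuasiPoly n f) {c : ℚ} (hc : 0 < c) :
    ∀ᶠ r : ℕ in atTop, f r < c * (r : ℚ) ^ n := by
  obtain ⟨N, q, hq, g, hg, hfg⟩ := hf
  have hlt : ∀ i, ∀ᶠ x : ℚ in atTop, (g i).eval x < c * x ^ n := fun i => by
    have hlim := div_tendsto_atTop_zero_of_degree_lt (g i) (C c * X ^ n)
      (by rw [degree_C_mul_X_pow n hc.ne']; exact mem_degreeLT.1 (hg i))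
    filter_upwards [hlim.eventually (gt_mem_nhds one_pos), eventually_gt_atTop 0] with x hx hx0
    simp only [eval_mul, eval_C, eval_pow, eval_X] at hx
    rwa [div_lt_one (by positivity)] at hx
  have hall := (eventually_all_finset (range q)).2 fun i _ => hlt i
  filter_upwards [tendsto_natCast_atTop_atTop.eventually hall, eventually_ge_atTop N] with r hr hrN
  rw [hfg r hrN]
  exact hr _ (mem_range.2 (Nat.mod_lt r hq))

end IsEventuallyQuasiPoly

theorem ordw_cons {n : ℕ} (w : Fin (n + 1) → ℕ) (k : ℕ) (t : Fin n → ℕ) :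
    ordw w (Fin.cons k t : Fin (n + 1) → ℕ) = w 0 * k + ordw (Fin.tail w) t := by
  simp [ordw, Fin.sum_univ_succ, Fin.tail]

theorem coord_le_ordw {m : ℕ} {w : Fin m → ℕ} (hw : ∀ i, 0 < w i) (v : Fin m → ℕ) (i : Fin m) :
    v i ≤ ordw w v :=
  (Nat.le_mul_of_pos_left _ (hw i)).trans <|
    single_le_sum (f := fun j => w j * v j) (fun _ _ => Nat.zero_le _) (mem_univ i)

theorem finite_VAw {m : ℕ} {w : Fin m → ℕ} (hw : ∀ i, 0 < w i) (A : Set (Fin m → ℕ)) (r : ℕ) :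
    (VAw w A r).Finite :=
  (Set.finite_Iic fun _ => r).subset fun v hv i => (coord_le_ordw hw v i).trans hv.2

def lowerSlice {n : ℕ} (A : Set (Fin (n + 1) → ℕ)) (k : ℕ) : Set (Fin n → ℕ) :=
  Fin.tail '' {a ∈ A | a 0 ≤ k}

theorem cons_mem_VA_iff {n : ℕ} {A : Set (Fin (n + 1) → ℕ)} {k : ℕ} {t : Fin n → ℕ} :
    (Fin.cons k t : Fin (n + 1) → ℕ) ∈ VA A ↔ t ∈ VA (lowerSlice A k) := by
  simp only [VA, lowerSlice, Set.mem_ofPred_eq, Fin.le_cons, Set.forall_mem_image]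
  aesop

theorem cons_mem_VAw_iff {n : ℕ} {w : Fin (n + 1) → ℕ} {A : Set (Fin (n + 1) → ℕ)} {r k : ℕ}
    {t : Fin n → ℕ} :
    (Fin.cons k t : Fin (n + 1) → ℕ) ∈ VAw w A r ↔
      w 0 * k ≤ r ∧ t ∈ VAw (Fin.tail w) (lowerSlice A k) (r - w 0 * k) := by
  simp only [VAw, Set.mem_ofPred_eq, cons_mem_VA_iff, ordw_cons]
  constructor
  · rintro ⟨hv, hr⟩
    exact ⟨by omega, hv, by omega⟩
  · rintro ⟨hk, hv, hr⟩
    exact ⟨hv, by omega⟩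

theorem ncard_VAw_succ {n : ℕ} {w : Fin (n + 1) → ℕ} (hw : ∀ i, 0 < w i)
    (A : Set (Fin (n + 1) → ℕ)) (r : ℕ) :
    (VAw w A r).ncard =
      ∑ k ∈ range (r / w 0 + 1), (VAw (Fin.tail w) (lowerSlice A k) (r - w 0 * k)).ncard := by
  have hU : VAw w A r = ⋃ k ∈ (range (r / w 0 + 1) : Set ℕ),
      Fin.cons (α := fun _ => ℕ) k '' VAw (Fin.tail w) (lowerSlice A k) (r - w 0 * k) := by
    ext v
    simp only [Set.mem_iUnion, Set.mem_image, exists_prop, coe_range, Set.mem_Iio,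
      Nat.lt_succ_iff, Nat.le_div_iff_mul_le (hw 0)]
    constructor
    · intro hv
      rw [← Fin.cons_self_tail v, cons_mem_VAw_iff] at hv
      exact ⟨v 0, by rw [mul_comm]; exact hv.1, Fin.tail v, hv.2, Fin.cons_self_tail v⟩
    · rintro ⟨k, hk, t, ht, rfl⟩
      exact cons_mem_VAw_iff.2 ⟨by rw [mul_comm]; exact hk, ht⟩
  have hdisj : (range (r / w 0 + 1) : Set ℕ).PairwiseDisjoint fun k =>
      Fin.cons (α := fun _ => ℕ) k '' VAw (Fin.tail w) (lowerSlice A k) (r - w 0 * k) := by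
    intro k _ l _ hkl
    refine Set.disjoint_left.2 ?_
    rintro _ ⟨t, _, rfl⟩ ⟨s, _, hst⟩
    exact hkl (Fin.cons_inj.1 hst).1.symm
  rw [hU, Set.Finite.ncard_biUnion (finite_toSet _)
    (fun k _ => (finite_VAw (w := Fin.tail w) (fun i => hw i.succ) _ _).image _) hdisj,
    finsum_mem_coe_finset]
  exact sum_congr rfl fun k _ =>
    Set.ncard_image_of_injective _ (Fin.cons_right_injective (α := fun _ => ℕ) k)

theorem exists_isQuasiPolyFrom_zero_ncard_VAw_empty :
    ∀ {m : ℕ} {w : Fin m → ℕ}, (∀ i, 0 < w i) →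
      ∃ q, 0 < q ∧ IsQuasiPolyFrom 0 q (m + 1) (fun r => ((VAw w ∅ r).ncard : ℚ))
  | 0, w, _ => by
    have hV : ∀ r, VAw w ∅ r = Set.univ := fun r => by ext v; simp [VAw, VA, ordw]
    refine ⟨1, one_pos, fun _ => C 1, fun _ => mem_degreeLT.2 (degree_C_le.trans_lt ?_),
      fun r _ => by simp [hV]⟩
    exact_mod_cast Nat.one_pos
  | n + 1, w, hw => by
    obtain ⟨q, hq, hf⟩ := exists_isQuasiPolyFrom_zero_ncard_VAw_empty (w := Fin.tail w)
      fun i => hw i.succ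
    refine ⟨w 0 * q, Nat.mul_pos (hw 0) hq, ?_⟩
    convert hf.stepSum hq (hw 0) using 2 with r
    simp [ncard_VAw_succ hw, lowerSlice, stepSum]

theorem isEventuallyQuasiPoly_ncard_VAw_of_finite :
    ∀ {m : ℕ} {w : Fin m → ℕ}, (∀ i, 0 < w i) → ∀ {A : Set (Fin m → ℕ)}, A.Finite → A.Nonempty →
      IsEventuallyQuasiPoly m (fun r => ((VAw w A r).ncard : ℚ))
  | 0, w, _, A, _, ⟨a, ha⟩ => by
    have hV : ∀ r, VAw w A r = ∅ := fun r =>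
      Set.eq_empty_of_forall_notMem fun v hv => hv.1 a ha fun i => i.elim0
    simp only [hV, Set.ncard_empty, Nat.cast_zero]
    exact IsEventuallyQuasiPoly.zero
  | n + 1, w, hw, A, hA, hne => by
    have hw' : ∀ i, 0 < Fin.tail w i := fun i => hw i.succ
    obtain ⟨K, hK⟩ := (hA.image (· 0)).bddAbove
    have hslice : ∀ k, K ≤ k → lowerSlice A k = Fin.tail '' A := fun k hk =>
      congrArg _ (Set.sep_eq_self_iff_mem_true.2 fun a ha => (hK ⟨a, ha, rfl⟩).trans hk)
    have hslices : ∀ k, IsEventuallyQuasiPoly (n + 1)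
        (fun r => ((VAw (Fin.tail w) (lowerSlice A k) r).ncard : ℚ)) := fun k => by
      rcases (lowerSlice A k).eq_empty_or_nonempty with h | h
      · obtain ⟨q, hq, hf⟩ := exists_isQuasiPolyFrom_zero_ncard_VAw_empty hw'
        exact h ▸ ⟨0, q, hq, hf⟩
      · exact (isEventuallyQuasiPoly_ncard_VAw_of_finite hw'
          ((hA.subset fun _ ha => ha.1).image _) h).mono n.le_succ
    have htail := isEventuallyQuasiPoly_ncard_VAw_of_finite hw' (hA.image Fin.tail) (hne.image _)
    refine ((IsEventuallyQuasiPoly.sum (range K) fun k _ => (hslices k).comp_sub (w 0 * k)).add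
      ((htail.stepSum (hw 0)).comp_sub (w 0 * K))).congr (M := w 0 * K) fun r hr => ?_
    simp only [Pi.add_apply, Finset.sum_apply]
    rw [ncard_VAw_succ hw, Nat.cast_sum, sum_range_div_succ_eq_add_stepSum (hw 0)
      (F := fun k s => ((VAw (Fin.tail w) (lowerSlice A k) s).ncard : ℚ))
      (fun k hk => by rw [hslice k hk]) hr]

theorem VA_setOf_minimal {m : ℕ} (A : Set (Fin m → ℕ)) : VA {a | Minimal (· ∈ A) a} = VA A := by
  ext v
  refine ⟨fun hv a ha hav => ?_, fun hv a ha => hv a ha.prop⟩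
  obtain ⟨b, hba, hb⟩ := exists_minimal_le_of_wellFoundedLT (· ∈ A) a ha
  exact hv b hb (hba.trans hav)

theorem finite_setOf_minimal {m : ℕ} (A : Set (Fin m → ℕ)) : {a | Minimal (· ∈ A) a}.Finite :=
  (setOfPred_minimal_antichain _).finite_of_partiallyWellOrderedOn
    (Set.isPWO_of_wellQuasiOrderedLE _)

theorem isEventuallyQuasiPoly_ncard_VAw {m : ℕ} {w : Fin m → ℕ} (hw : ∀ i, 0 < w i)
    {A : Set (Fin m → ℕ)} (hA : A.Nonempty) :
    IsEventuallyQuasiPoly m (fun r => ((VAw w A r).ncard : ℚ)) := by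
  obtain ⟨a, ha⟩ := hA
  obtain ⟨b, -, hb⟩ := exists_minimal_le_of_wellFoundedLT (· ∈ A) a ha
  have hV : ∀ r, VAw w A r = VAw w {a | Minimal (· ∈ A) a} r := fun r => by
    rw [VAw, VAw, VA_setOf_minimal]
  simpa only [hV] using
    isEventuallyQuasiPoly_ncard_VAw_of_finite hw (finite_setOf_minimal A) ⟨b, hb⟩

theorem pow_le_ncard_ordw_le {m : ℕ} {w : Fin m → ℕ} (hw : ∀ i, 0 < w i) (r : ℕ) :
    (r / (∑ i, w i + 1) + 1) ^ m ≤ {x : Fin m → ℕ | ordw w x ≤ r}.ncard := by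
  set B := ∑ i, w i + 1
  have hbox : ((Fintype.piFinset fun _ : Fin m => range (r / B + 1) : Finset (Fin m → ℕ)) :
      Set (Fin m → ℕ)) ⊆ {x | ordw w x ≤ r} := fun x hx => by
    simp only [Fintype.coe_piFinset, Set.mem_pi, Set.mem_univ, coe_range, Set.mem_Iio,
      Nat.lt_succ_iff, forall_const] at hx
    calc ordw w x ≤ ∑ i, w i * (r / B) := sum_le_sum fun i _ => Nat.mul_le_mul_left _ (hx i)
      _ ≤ B * (r / B) := by rw [← sum_mul]; exact Nat.mul_le_mul_right _ (Nat.le_succ _)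
      _ ≤ r := Nat.mul_div_le r B
  have := Set.ncard_le_ncard hbox ((finite_VAw hw ∅ r).subset fun x hx => ⟨fun _ h => h.elim, hx⟩)
  rwa [Set.ncard_coe_finset, Fintype.card_piFinset, prod_const, card_range, card_univ,
    Fintype.card_fin] at this

theorem not_isEventuallyQuasiPoly_ncard_ordw_le {m : ℕ} {w : Fin m → ℕ} (hw : ∀ i, 0 < w i) :
    ¬ IsEventuallyQuasiPoly m (fun r => ({x : Fin m → ℕ | ordw w x ≤ r}.ncard : ℚ)) := by
  intro hf
  set B := ∑ i, w i + 1
  have hB : (0 : ℚ) < B := by positivity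
  obtain ⟨r, hr⟩ := (hf.eventually_lt_mul_pow (inv_pos.2 (pow_pos hB m))).exists
  have hrB : (r : ℚ) / B ≤ ((r / B + 1 : ℕ) : ℚ) := by
    have : r ≤ (r / B + 1) * B := by
      rw [add_mul, one_mul]
      exact (Nat.lt_div_mul_add (Nat.succ_pos _)).le
    rw [div_le_iff₀ hB]
    exact_mod_cast this
  have hcount : ((r / B + 1 : ℕ) : ℚ) ^ m ≤ ({x : Fin m → ℕ | ordw w x ≤ r}.ncard : ℚ) := by
    exact_mod_cast pow_le_ncard_ordw_le hw r
  have := (pow_le_pow_left₀ (by positivity) hrB m).trans hcount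
  rw [div_pow] at this
  linarith [show (r : ℚ) ^ m / B ^ m = ((B : ℚ) ^ m)⁻¹ * r ^ m by ring]

/-- There is a quasi-polynomial of degree at most `m - 1` that equals
`Card V_A^{(w)}(r)` for all sufficiently large `r` iff `A` is nonempty; moreover, if
`A = ∅` then `Card V_A^{(w)}(r)` is, for every `r`, the number of `x ∈ ℕ^m` with
`ord_w x ≤ r`, which is a quasi-polynomial of degree exactly `m`. -/
theorem dimension_quasipolynomial_degree_lt_iff_nonempty
    (m : ℕ) (hm : 0 < m) (w : Fin m → ℕ) (hw : ∀ i, 0 < w i)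
    (A : Set (Fin m → ℕ)) :
    ((∃ (q : ℕ) (hq : 0 < q) (g : Fin q → Polynomial ℚ),
        (∀ i : Fin q, (g i).natDegree ≤ m - 1) ∧
        ∃ N : ℕ, ∀ r : ℕ, N ≤ r →
          (Set.ncard (VAw w A r) : ℚ) = (g ⟨r % q, Nat.mod_lt r hq⟩).eval (r : ℚ))
      ↔ A.Nonempty) ∧
    (A = ∅ →
      (∀ r : ℕ, Set.ncard (VAw w A r) = Set.ncard {x : Fin m → ℕ | ordw w x ≤ r}) ∧
      ∃ (q : ℕ) (hq : 0 < q) (g : Fin q → Polynomial ℚ),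
        (∀ i : Fin q, (g i).natDegree ≤ m) ∧ (∃ i : Fin q, (g i).natDegree = m) ∧
        ∀ r : ℕ,
          (Set.ncard {x : Fin m → ℕ | ordw w x ≤ r} : ℚ)
            = (g ⟨r % q, Nat.mod_lt r hq⟩).eval (r : ℚ)) := by
  have hempty : ∀ r, VAw w ∅ r = {x | ordw w x ≤ r} := fun r => by ext; simp [VAw, VA]
  refine ⟨?_, fun hA => ?_⟩
  · rw [← IsEventuallyQuasiPoly.iff_exists_fin hm]
    refine ⟨fun hf => Set.nonempty_iff_ne_empty.2 ?_, isEventuallyQuasiPoly_ncard_VAw hw⟩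
    rintro rfl
    exact not_isEventuallyQuasiPoly_ncard_ordw_le hw (by simpa only [hempty] using hf)
  · subst hA
    obtain ⟨q, hq, hf⟩ := exists_isQuasiPolyFrom_zero_ncard_VAw_empty hw
    obtain ⟨g, hg, hfg⟩ := (isQuasiPolyFrom_iff_exists_fin hq).1 (by simpa only [hempty] using hf)
    have hdeg : ∀ i, (g i).natDegree ≤ m := fun i => by
      simpa using (mem_degreeLT_iff_natDegree_le_pred m.succ_pos).1 (hg i)
    refine ⟨fun r => by rw [hempty], q, hq, g, hdeg, ?_, fun r => hfg r r.zero_le⟩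
    by_contra! hlt
    refine not_isEventuallyQuasiPoly_ncard_ordw_le hw ((IsEventuallyQuasiPoly.iff_exists_fin hm).2
      ⟨q, hq, g, fun i => ?_, 0, fun r _ => hfg r r.zero_le⟩)
    have := hdeg i
    have := hlt i
    omega
end

section
/- Let A = {a^(1), …, a^(d)} be a finite subset of ℕ^m. For each subset ε ⊆ {1, …, d} let c_ε ∈ ℕ^m be the coordinatewise maximum of the tuples a^(i) with i ∈ ε (with c_∅ = (0, …, 0)), and let λ(s) denote the number of x ∈ ℕ^m with ord_w x ≤ s. Then for all sufficiently large r ∈ ℕ, Card V_A^{(w)}(r) = Σ_{ε ⊆ {1, …, d}} (−1)^{|ε|} λ(r − ord_w c_ε). -/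
lemma ordw_add {m : ℕ} (w x y : Fin m → ℕ) :
    ordw w (x + y) = ordw w x + ordw w y := by
  simp [ordw, mul_add, Finset.sum_add_distrib]

lemma ordw_mono {m : ℕ} (w : Fin m → ℕ) {x y : Fin m → ℕ} (h : x ≤ y) :
    ordw w x ≤ ordw w y :=
  Finset.sum_le_sum fun i _ => Nat.mul_le_mul_left _ (h i)

lemma apply_le_ordw {m : ℕ} {w : Fin m → ℕ} (hw : ∀ i, 0 < w i) (x : Fin m → ℕ) (i : Fin m) :
    x i ≤ ordw w x :=
  le_trans (Nat.le_mul_of_pos_left _ (hw i))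
    (Finset.single_le_sum (f := fun i => w i * x i) (fun _ _ => Nat.zero_le _)
      (Finset.mem_univ i))

lemma finite_ball {m : ℕ} {w : Fin m → ℕ} (hw : ∀ i, 0 < w i) (s : ℕ) :
    {x : Fin m → ℕ | ordw w x ≤ s}.Finite := by
  apply Set.Finite.subset (Set.finite_Icc (0 : Fin m → ℕ) (fun _ => s))
  intro x hx
  exact ⟨fun i => Nat.zero_le _, fun i => le_trans (apply_le_ordw hw x i) hx⟩

/-- Inclusion–exclusion formula for the dimension function of a finite set
`A = {a⁽¹⁾,…,a⁽ᵈ⁾} ⊆ ℕ^m`: for each `ε ⊆ {1,…,d}` let `c_ε` be the coordinatewise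
maximum of the `a⁽ⁱ⁾`, `i ∈ ε` (`c_∅ = 0`) and `λ(s) = Card{x : ord_w x ≤ s}`.  Then for
all sufficiently large `r`,
`Card V_A^{(w)}(r) = Σ_{ε ⊆ {1,…,d}} (−1)^{|ε|} λ(r − ord_w c_ε)`. -/
theorem card_VAw_inclusion_exclusion_eventually
    (m : ℕ) (hm : 0 < m) (w : Fin m → ℕ) (hw : ∀ i, 0 < w i)
    (d : ℕ) (a : Fin d → (Fin m → ℕ)) :
    ∃ N : ℕ, ∀ r : ℕ, N ≤ r →
      (Set.ncard (VAw w (Set.range a) r) : ℤ)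
        = ∑ ε : Finset (Fin d), (-1 : ℤ) ^ ε.card *
            (Set.ncard {x : Fin m → ℕ |
              ordw w x ≤ r - ordw w (fun i => ε.sup fun j => a j i)} : ℤ) := by
  classical
  set c : Finset (Fin d) → (Fin m → ℕ) := fun ε => fun i => ε.sup fun j => a j i with hcdef
  refine ⟨ordw w (c Finset.univ), fun r hr => ?_⟩
  have hce : ∀ ε : Finset (Fin d), ordw w (c ε) ≤ r := by
    intro ε
    refine le_trans (ordw_mono w fun i => ?_) hr
    exact Finset.sup_mono (Finset.subset_univ ε)
  have hcle : ∀ (ε : Finset (Fin d)) (v : Fin m → ℕ), c ε ≤ v ↔ ∀ j ∈ ε, a j ≤ v := by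
    intro ε v
    constructor
    · intro h j hj i
      exact le_trans (Finset.le_sup (f := fun j => a j i) hj) (h i)
    · intro h i
      exact Finset.sup_le fun j hj => h j hj i
  set B : Finset (Fin m → ℕ) := (finite_ball hw r).toFinset with hB
  -- LHS as a filter card
  have hVA : Set.ncard (VAw w (Set.range a) r)
      = (B.filter fun v => ∀ j, ¬ a j ≤ v).card := by
    rw [← Set.ncard_coe_finset]
    congr 1
    ext v
    simp only [VAw, VA, Set.mem_setOf_eq, Finset.coe_filter, hB,
      Set.Finite.mem_toFinset, Set.mem_setOf_eq, Set.mem_range,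
      forall_exists_index]
    constructor
    · rintro ⟨h1, h2⟩
      exact ⟨h2, fun j => h1 (a j) j rfl⟩
    · rintro ⟨h2, h1⟩
      exact ⟨fun x j hj => hj ▸ h1 j, h2⟩
  -- each ε term
  have hEps : ∀ ε : Finset (Fin d),
      ((B.filter fun v => c ε ≤ v).card : ℤ)
        = (Set.ncard {x : Fin m → ℕ | ordw w x ≤ r - ordw w (c ε)} : ℤ) := by
    intro ε
    have himg : (↑(B.filter fun v => c ε ≤ v) : Set (Fin m → ℕ))
        = (fun x => c ε + x) '' {x | ordw w x ≤ r - ordw w (c ε)} := by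
      ext v
      simp only [Finset.coe_filter, Set.mem_setOf_eq, hB, Set.Finite.mem_toFinset,
        Set.mem_image]
      constructor
      · rintro ⟨hv, hle⟩
        refine ⟨v - c ε, ?_, add_tsub_cancel_of_le hle⟩
        have h1 : ordw w (c ε) + ordw w (v - c ε) = ordw w v := by
          rw [← ordw_add]
          congr 1
          exact add_tsub_cancel_of_le hle
        omega
      · rintro ⟨x, hx, rfl⟩
        have h1 : ordw w (c ε + x) = ordw w (c ε) + ordw w x := ordw_add w _ _
        refine ⟨?_, fun i => le_add_right le_rfl⟩
        have := hce ε
        have hx' : ordw w x ≤ r - ordw w (c ε) := hx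
        omega
    have hinj : Function.Injective (fun x : Fin m → ℕ => c ε + x) :=
      add_right_injective (c ε)
    rw [← Set.ncard_coe_finset, himg, Set.ncard_image_of_injective _ hinj]
  -- pointwise inclusion–exclusion identity
  have hpt : ∀ v : Fin m → ℕ,
      (if (∀ j, ¬ a j ≤ v) then (1 : ℤ) else 0)
        = ∑ ε : Finset (Fin d), (-1 : ℤ) ^ ε.card * (if c ε ≤ v then 1 else 0) := by
    intro v
    have lhs_eq : (if (∀ j, ¬ a j ≤ v) then (1 : ℤ) else 0)
        = ∏ j : Fin d, ((-(if a j ≤ v then (1 : ℤ) else 0)) + 1) := by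
      have hfac : ∀ j : Fin d, ((-(if a j ≤ v then (1 : ℤ) else 0)) + 1)
          = (if ¬ a j ≤ v then (1 : ℤ) else 0) := by
        intro j
        by_cases h : a j ≤ v <;> simp [h]
      simp_rw [hfac, Finset.prod_boole]
      simp
    rw [lhs_eq, Finset.prod_add]
    rw [Finset.powerset_univ]
    refine Finset.sum_congr rfl fun ε _ => ?_
    rw [Finset.prod_const_one, mul_one]
    have : ∏ j ∈ ε, (-(if a j ≤ v then (1 : ℤ) else 0))
        = (-1 : ℤ) ^ ε.card * ∏ j ∈ ε, (if a j ≤ v then (1 : ℤ) else 0) := by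
      rw [← Finset.prod_const, ← Finset.prod_mul_distrib]
      exact Finset.prod_congr rfl fun j _ => (neg_one_mul _).symm
    rw [this, Finset.prod_boole]
    congr 2
    simp only [eq_iff_iff]
    exact (hcle ε v).symm
  -- main computation
  rw [hVA]
  have lhs_sum : ((B.filter fun v => ∀ j, ¬ a j ≤ v).card : ℤ)
      = ∑ v ∈ B, (if (∀ j, ¬ a j ≤ v) then (1 : ℤ) else 0) := by
    rw [Finset.card_filter]
    push_cast
    rfl
  rw [lhs_sum]
  have : ∑ v ∈ B, (if (∀ j, ¬ a j ≤ v) then (1 : ℤ) else 0)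
      = ∑ ε : Finset (Fin d), (-1 : ℤ) ^ ε.card
          * ((B.filter fun v => c ε ≤ v).card : ℤ) := by
    calc ∑ v ∈ B, (if (∀ j, ¬ a j ≤ v) then (1 : ℤ) else 0)
        = ∑ v ∈ B, ∑ ε : Finset (Fin d),
            (-1 : ℤ) ^ ε.card * (if c ε ≤ v then 1 else 0) := by
          exact Finset.sum_congr rfl fun v _ => hpt v
      _ = ∑ ε : Finset (Fin d), ∑ v ∈ B,
            (-1 : ℤ) ^ ε.card * (if c ε ≤ v then 1 else 0) := Finset.sum_comm
      _ = ∑ ε : Finset (Fin d), (-1 : ℤ) ^ ε.card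
            * ((B.filter fun v => c ε ≤ v).card : ℤ) := by
          refine Finset.sum_congr rfl fun ε _ => ?_
          rw [← Finset.mul_sum, Finset.card_filter]
          push_cast
          rfl
  rw [this]
  exact Finset.sum_congr rfl fun ε _ => by rw [hEps ε]
end
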